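/- Let μ ∈ (1,2) be real and set λ = μ(μ−1)(2−μ) and η = μ(2−μ). Then λ > 0, and the function g(z) = 3μ² e^{μz} (1 − tanh z) is a nonzero bounded solution on ℝ of the ODE g'''' + 4Φ g'' + 4λ g' − 4 g'' + 3η² g = 0 with Φ(z) = 3 sech² z; moreover g(z) → 0 as z → +∞ and as z → −∞ (indeed |g(z)| ≤ C e^{−(2−μ)z} for z ≥ 0 and |g(z)| ≤ C e^{μz} for z ≤ 0, for some constant C). -/

import Mathlib

/-!
Since `tanh' = 1 - tanh²`, differentiating `exp (μ z) * P (tanh z)` for a polynomial `P` gives a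
function of the same shape with `P` replaced by `μ P + (1 - X²) P'`. The ODE for
`g = exp (μ z) * 3μ² (1 - tanh z)` therefore reduces to an identity between polynomials in `X`.
For the decay, `1 - tanh z = 2 / (exp (2z) + 1)` lies strictly between `0` and `min 2 (2 exp (-2z))`.
-/

open Filter Polynomial Real Topology

theorem Real.hasDerivAt_tanh (x : ℝ) : HasDerivAt tanh (1 - tanh x ^ 2) x := by
  have h := (hasDerivAt_sinh x).div (hasDerivAt_cosh x) (cosh_pos x).ne'
  rw [show sinh / cosh = tanh from funext fun y => (tanh_eq_sinh_div_cosh y).symm] at h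
  refine h.congr_deriv ?_
  rw [tanh_eq_sinh_div_cosh]
  field_simp

theorem Real.one_div_cosh_sq (x : ℝ) : (1 / cosh x) ^ 2 = 1 - tanh x ^ 2 := by
  rw [tanh_eq_sinh_div_cosh]
  field_simp [(cosh_pos x).ne']
  linarith [cosh_sq_sub_sinh_sq x]

theorem Real.one_sub_tanh_eq (x : ℝ) : 1 - tanh x = 2 / (exp (2 * x) + 1) := by
  rw [tanh_eq, exp_neg, show 2 * x = x + x by ring, exp_add]
  field_simp
  ring

section ExpMulEvalTanh

variable (μ : ℝ)

noncomputable def expMulEvalTanh (P : ℝ[X]) (z : ℝ) : ℝ := exp (μ * z) * P.eval (tanh z)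

noncomputable def expTanhDeriv (P : ℝ[X]) : ℝ[X] := C μ * P + (1 - X ^ 2) * derivative P

theorem hasDerivAt_expMulEvalTanh (P : ℝ[X]) (z : ℝ) :
    HasDerivAt (expMulEvalTanh μ P) (expMulEvalTanh μ (expTanhDeriv μ P) z) z := by
  have hexp : HasDerivAt (fun z => exp (μ * z)) (exp (μ * z) * μ) z :=
    ((hasDerivAt_id z).const_mul μ).exp.congr_deriv (by simp)
  refine (hexp.mul ((P.hasDerivAt _).comp z (hasDerivAt_tanh z))).congr_deriv ?_
  simp only [expMulEvalTanh, expTanhDeriv, eval_add, eval_mul, eval_C, eval_sub, eval_one,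
    eval_pow, eval_X, Function.comp_apply]
  ring

theorem iteratedDeriv_expMulEvalTanh (n : ℕ) (P : ℝ[X]) :
    iteratedDeriv n (expMulEvalTanh μ P) = expMulEvalTanh μ ((expTanhDeriv μ)^[n] P) := by
  induction n generalizing P with
  | zero => rfl
  | succ n ih =>
    rw [iteratedDeriv_succ', funext fun z => (hasDerivAt_expMulEvalTanh μ P z).deriv, ih,
      Function.iterate_succ_apply]

theorem expTanhDeriv_ode_one_sub_X :
    (expTanhDeriv μ)^[4] (3 * C μ ^ 2 * (1 - X))
      + 12 * (1 - X ^ 2) * (expTanhDeriv μ)^[2] (3 * C μ ^ 2 * (1 - X))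
      + 4 * (C μ * (C μ - 1) * (2 - C μ)) * expTanhDeriv μ (3 * C μ ^ 2 * (1 - X))
      - 4 * (expTanhDeriv μ)^[2] (3 * C μ ^ 2 * (1 - X))
      + 3 * (C μ * (2 - C μ)) ^ 2 * (3 * C μ ^ 2 * (1 - X)) = 0 := by
  simp only [Function.iterate_succ, Function.iterate_zero, Function.comp_apply, id, expTanhDeriv]
  simp only [derivative_mul, derivative_add, derivative_sub, derivative_neg, derivative_pow,
    derivative_C, derivative_X, derivative_one, derivative_ofNat, Nat.cast_ofNat, C_ofNat,
    Nat.add_one_sub_one, pow_one, zero_mul, mul_zero, add_zero, zero_add, zero_sub, mul_one,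
    mul_neg, neg_mul, neg_neg, neg_zero, neg_add_rev]
  ring

end ExpMulEvalTanh

theorem ode_three_sq_mul_exp_mul_one_sub_tanh (μ z : ℝ) :
    iteratedDeriv 4 (fun z' : ℝ => 3 * μ ^ 2 * exp (μ * z') * (1 - tanh z')) z
      + 4 * (3 * (1 / cosh z) ^ 2) *
          iteratedDeriv 2 (fun z' : ℝ => 3 * μ ^ 2 * exp (μ * z') * (1 - tanh z')) z
      + 4 * (μ * (μ - 1) * (2 - μ)) *
          deriv (fun z' : ℝ => 3 * μ ^ 2 * exp (μ * z') * (1 - tanh z')) z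
      - 4 * iteratedDeriv 2 (fun z' : ℝ => 3 * μ ^ 2 * exp (μ * z') * (1 - tanh z')) z
      + 3 * (μ * (2 - μ)) ^ 2 * (3 * μ ^ 2 * exp (μ * z) * (1 - tanh z)) = 0 := by
  have hg : (fun z' : ℝ => 3 * μ ^ 2 * exp (μ * z') * (1 - tanh z'))
      = expMulEvalTanh μ (3 * C μ ^ 2 * (1 - X)) := by
    ext z'
    simp only [expMulEvalTanh, eval_mul, eval_ofNat, eval_pow, eval_C, eval_sub, eval_one, eval_X]
    ring
  have hpoly := congrArg (eval (tanh z)) (expTanhDeriv_ode_one_sub_X μ)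
  simp only [eval_add, eval_sub, eval_mul, eval_pow, eval_ofNat, eval_one, eval_C, eval_X,
    eval_zero] at hpoly
  rw [← iteratedDeriv_one, hg, iteratedDeriv_expMulEvalTanh, iteratedDeriv_expMulEvalTanh,
    iteratedDeriv_expMulEvalTanh, one_div_cosh_sq]
  simp only [expMulEvalTanh, Function.iterate_one]
  linear_combination exp (μ * z) * hpoly

section Decay

variable (μ z : ℝ)

theorem exp_mul_one_sub_tanh_pos : 0 < exp (μ * z) * (1 - tanh z) :=
  mul_pos (exp_pos _) (sub_pos.2 (tanh_lt_one z))

theorem exp_mul_one_sub_tanh_le_two_mul_exp : exp (μ * z) * (1 - tanh z) ≤ 2 * exp (μ * z) := by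
  nlinarith [neg_one_lt_tanh z, exp_pos (μ * z)]

theorem exp_mul_one_sub_tanh_le_two_mul_exp_neg :
    exp (μ * z) * (1 - tanh z) ≤ 2 * exp (-(2 - μ) * z) := by
  have hsplit : exp (μ * z) = exp (-(2 - μ) * z) * exp (2 * z) := by rw [← exp_add]; ring_nf
  rw [one_sub_tanh_eq, hsplit, mul_div_assoc', div_le_iff₀ (by positivity)]
  nlinarith [exp_pos (-(2 - μ) * z)]

variable {μ}

theorem tendsto_exp_mul_one_sub_tanh_atTop (hμ : μ < 2) :
    Tendsto (fun z => exp (μ * z) * (1 - tanh z)) atTop (𝓝 0) := by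
  have hexp : Tendsto (fun z => 2 * exp (-(2 - μ) * z)) atTop (𝓝 0) := by
    simpa using (tendsto_exp_atBot.comp
      (tendsto_id.const_mul_atTop_of_neg (by linarith : -(2 - μ) < 0))).const_mul 2
  exact squeeze_zero (fun z => (exp_mul_one_sub_tanh_pos μ z).le)
    (exp_mul_one_sub_tanh_le_two_mul_exp_neg μ) hexp

theorem tendsto_exp_mul_one_sub_tanh_atBot (hμ : 0 < μ) :
    Tendsto (fun z => exp (μ * z) * (1 - tanh z)) atBot (𝓝 0) := by
  have hexp : Tendsto (fun z => 2 * exp (μ * z)) atBot (𝓝 0) := by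
    simpa using (tendsto_exp_atBot.comp (tendsto_id.const_mul_atBot hμ)).const_mul 2
  exact squeeze_zero' (Eventually.of_forall fun z => (exp_mul_one_sub_tanh_pos μ z).le)
    (Eventually.of_forall (exp_mul_one_sub_tanh_le_two_mul_exp μ)) hexp

end Decay

/-- For `μ ∈ (1,2)`, `λ = μ(μ−1)(2−μ)`, `η = μ(2−μ)`, the function
`g(z) = 3μ² e^{μz}(1 − tanh z)` is a nonzero bounded solution of
`g'''' + 4Φ g'' + 4λ g' − 4g'' + 3η² g = 0`, `Φ(z) = 3 sech² z`,
decaying at both infinities with explicit exponential rates. -/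
theorem unstable_eigenmode_explicit (μ : ℝ) (hμ1 : 1 < μ) (hμ2 : μ < 2) :
    0 < μ * (μ - 1) * (2 - μ) ∧
    (∃ z : ℝ, (3 * μ ^ 2 * Real.exp (μ * z) * (1 - Real.tanh z)) ≠ 0) ∧
    (∀ z : ℝ,
      iteratedDeriv 4 (fun z' : ℝ => 3 * μ ^ 2 * Real.exp (μ * z') * (1 - Real.tanh z')) z
        + 4 * (3 * (1 / Real.cosh z) ^ 2) *
            iteratedDeriv 2 (fun z' : ℝ => 3 * μ ^ 2 * Real.exp (μ * z') * (1 - Real.tanh z')) z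
        + 4 * (μ * (μ - 1) * (2 - μ)) *
            deriv (fun z' : ℝ => 3 * μ ^ 2 * Real.exp (μ * z') * (1 - Real.tanh z')) z
        - 4 * iteratedDeriv 2 (fun z' : ℝ => 3 * μ ^ 2 * Real.exp (μ * z') * (1 - Real.tanh z')) z
        + 3 * (μ * (2 - μ)) ^ 2 * (3 * μ ^ 2 * Real.exp (μ * z) * (1 - Real.tanh z)) = 0) ∧
    Tendsto (fun z : ℝ => 3 * μ ^ 2 * Real.exp (μ * z) * (1 - Real.tanh z)) atTop (nhds 0) ∧
    Tendsto (fun z : ℝ => 3 * μ ^ 2 * Real.exp (μ * z) * (1 - Real.tanh z)) atBot (nhds 0) ∧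
    ∃ C : ℝ, 0 < C ∧
      (∀ z : ℝ, 0 ≤ z →
        |3 * μ ^ 2 * Real.exp (μ * z) * (1 - Real.tanh z)| ≤ C * Real.exp (-(2 - μ) * z)) ∧
      (∀ z : ℝ, z ≤ 0 →
        |3 * μ ^ 2 * Real.exp (μ * z) * (1 - Real.tanh z)| ≤ C * Real.exp (μ * z)) := by
  have hμ0 : 0 < μ := by linarith
  have hc : 0 < 3 * μ ^ 2 := by positivity
  have hg (z : ℝ) : 3 * μ ^ 2 * exp (μ * z) * (1 - tanh z)
      = 3 * μ ^ 2 * (exp (μ * z) * (1 - tanh z)) := mul_assoc _ _ _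
  have hpos (z : ℝ) : 0 < 3 * μ ^ 2 * exp (μ * z) * (1 - tanh z) :=
    hg z ▸ mul_pos hc (exp_mul_one_sub_tanh_pos μ z)
  refine ⟨mul_pos (mul_pos hμ0 (sub_pos.2 hμ1)) (sub_pos.2 hμ2), ⟨0, (hpos 0).ne'⟩,
    ode_three_sq_mul_exp_mul_one_sub_tanh μ, ?_, ?_, 6 * μ ^ 2, by positivity,
    fun z _ => ?_, fun z _ => ?_⟩
  · simp_rw [hg]
    simpa using (tendsto_exp_mul_one_sub_tanh_atTop hμ2).const_mul (3 * μ ^ 2)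
  · simp_rw [hg]
    simpa using (tendsto_exp_mul_one_sub_tanh_atBot hμ0).const_mul (3 * μ ^ 2)
  · rw [abs_of_pos (hpos z), hg]
    nlinarith [exp_mul_one_sub_tanh_le_two_mul_exp_neg μ z]
  · rw [abs_of_pos (hpos z), hg]
    nlinarith [exp_mul_one_sub_tanh_le_two_mul_exp μ z]
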